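/- Let τ, p, M, K, β > 0 with M > K. Then log₂(1 + (τ·p²·(M−K)·β²)/((τ·p·β + 1)·S + τ·p·β + 1)) ≥ log₂(1 + τ·p²·(M−K)·β²) − log₂(1 + τ·p·β) − log₂(1 + K/τ) for any real S with 0 ≤ S ≤ K/τ. -/

import Mathlib

/-! The interference-plus-noise denominator factors as `(1 + τpβ)(1 + S)`, and `S ≤ K/τ` bounds it by
`(1 + τpβ)(1 + K/τ)`. Since both factors are at least `1`, dividing `1 + x` by their product costs at
most what dividing only `x` by the (smaller) true denominator costs; taking `log₂` splits the product
into the two subtracted terms. -/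

open Real

lemma one_add_div_le_one_add_div {x d e : ℝ} (hx : 0 ≤ x) (hd : 1 ≤ d) (he : 0 < e) (hed : e ≤ d) :
    (1 + x) / d ≤ 1 + x / e := by
  rw [add_div]
  gcongr
  exact div_le_one_of_le₀ hd (by linarith)

lemma logb_one_add_sub_sub_le {b x c d e : ℝ} (hb : 1 < b) (hx : 0 ≤ x) (hc : 1 ≤ c) (hd : 1 ≤ d)
    (he : 0 < e) (hed : e ≤ c * d) :
    logb b (1 + x) - logb b c - logb b d ≤ logb b (1 + x / e) := by
  have hcd : 1 ≤ c * d := one_le_mul_of_one_le_of_one_le hc hd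
  calc logb b (1 + x) - logb b c - logb b d = logb b ((1 + x) / (c * d)) := by
        rw [logb_div (by positivity) (by positivity), logb_mul (by positivity) (by positivity)]
        ring
    _ ≤ logb b (1 + x / e) :=
        logb_le_logb_of_le hb (by positivity) (one_add_div_le_one_add_div hx hcd he hed)

theorem stmt_16_general (τ p M K β S : ℝ) (hτ : 0 < τ) (hp : 0 < p)
    (hβ : 0 < β) (hMK : K < M) (hS0 : 0 ≤ S) (hS : S ≤ K / τ) :
    Real.logb 2 (1 + (τ * p ^ 2 * (M - K) * β ^ 2) / ((τ * p * β + 1) * S + τ * p * β + 1))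
      ≥ Real.logb 2 (1 + τ * p ^ 2 * (M - K) * β ^ 2)
          - Real.logb 2 (1 + τ * p * β) - Real.logb 2 (1 + K / τ) := by
  have hpb : 0 < τ * p * β := by positivity
  have hMK' : 0 < M - K := sub_pos.mpr hMK
  have hden : (τ * p * β + 1) * S + τ * p * β + 1 ≤ (1 + τ * p * β) * (1 + K / τ) :=
    calc (τ * p * β + 1) * S + τ * p * β + 1 = (1 + τ * p * β) * (1 + S) := by ring
      _ ≤ (1 + τ * p * β) * (1 + K / τ) := by gcongr
  exact logb_one_add_sub_sub_le one_lt_two (by positivity) (by linarith) (by linarith)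
    (by positivity) hden

theorem stmt_16 (τ p M K β S : ℝ) (hτ : 0 < τ) (hp : 0 < p) (hM : 0 < M) (hK : 0 < K)
    (hβ : 0 < β) (hMK : K < M) (hS0 : 0 ≤ S) (hS : S ≤ K / τ) :
    Real.logb 2 (1 + (τ * p ^ 2 * (M - K) * β ^ 2) / ((τ * p * β + 1) * S + τ * p * β + 1))
      ≥ Real.logb 2 (1 + τ * p ^ 2 * (M - K) * β ^ 2)
          - Real.logb 2 (1 + τ * p * β) - Real.logb 2 (1 + K / τ) :=
  stmt_16_general τ p M K β S hτ hp hβ hMK hS0 hS
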